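/- For all n, k ≥ 1: MLPO_{n+1} <_W LPO_n, and LPO_k is not continuously Weihrauch reducible to MLPO_{n+1} (LPO_k ≰_W MLPO_{n+1}). -/

import Mathlib

open Filter Topology

abbrev Baire : Type := ℕ → ℕ

/-- The pairing `⟨p,q⟩(2n) = p(n)`, `⟨p,q⟩(2n+1) = q(n)`. -/
def pairB (p q : Baire) : Baire := fun n => if n % 2 = 0 then p (n / 2) else q (n / 2)

/-- A problem: a partial multivalued function on Baire space. -/
structure Problem where
  dom : Set Baire
  sol : Baire → Set Baire

/-- Continuous Weihrauch reducibility. -/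
def WRed (f g : Problem) : Prop :=
  ∃ (Kd Hd : Set Baire) (K H : Baire → Baire),
    ContinuousOn K Kd ∧ ContinuousOn H Hd ∧
      ∀ p ∈ f.dom, p ∈ Kd ∧ K p ∈ g.dom ∧
        ∀ q ∈ g.sol (K p), pairB p q ∈ Hd ∧ H (pairB p q) ∈ f.sol p

/-- Strong continuous Weihrauch reducibility. -/
def SWRed (f g : Problem) : Prop :=
  ∃ (Kd Hd : Set Baire) (K H : Baire → Baire),
    ContinuousOn K Kd ∧ ContinuousOn H Hd ∧
      ∀ p ∈ f.dom, p ∈ Kd ∧ K p ∈ g.dom ∧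
        ∀ q ∈ g.sol (K p), q ∈ Hd ∧ H q ∈ f.sol p

def WEquiv (f g : Problem) : Prop := WRed f g ∧ WRed g f
def SWEquiv (f g : Problem) : Prop := SWRed f g ∧ SWRed g f
def WLt (f g : Problem) : Prop := WRed f g ∧ ¬ WRed g f

/-- `range(p-1)`. -/
def rangeM (p : Baire) : Set ℕ := {n | ∃ i, p i = n + 1}

/-- Characteristic function of a set of naturals. -/
noncomputable def chi (A : Set ℕ) : Baire := A.indicator fun _ => 1

noncomputable def EC : Problem where
  dom := Set.univ
  sol := fun p => {chi (rangeM p)}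

noncomputable def EC1 : Problem where
  dom := {p | ((rangeM p)ᶜ).encard ≤ 1}
  sol := fun p => {chi (rangeM p)}

def pfst (r : Baire) : Baire := fun n => r (2 * n)
def psnd (r : Baire) : Baire := fun n => r (2 * n + 1)

noncomputable def SEP : Problem where
  dom := {r | rangeM (pfst r) ∩ rangeM (psnd r) = ∅}
  sol := fun r =>
    {s | ∃ A : Set ℕ, s = chi A ∧ rangeM (pfst r) ⊆ A ∧ A ⊆ (rangeM (psnd r))ᶜ}

noncomputable def SEP1 : Problem where
  dom := {r | rangeM (pfst r) ∩ rangeM (psnd r) = ∅ ∧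
    ((rangeM (pfst r) ∪ rangeM (psnd r))ᶜ).encard ≤ 1}
  sol := SEP.sol

/- rationals -/
def ratEnum (i : ℕ) : ℚ :=
  ((i.unpair.1 : ℚ) - (i.unpair.2.unpair.1 : ℚ)) / ((i.unpair.2.unpair.2 : ℚ) + 1)

def rhoCauchy (p : Baire) (x : ℝ) : Prop :=
  ∀ n, |(ratEnum (p n) : ℝ) - x| ≤ (2 : ℝ) ^ (-(n : ℤ))

def rhoNaive (p : Baire) (x : ℝ) : Prop :=
  Tendsto (fun n => ((ratEnum (p n) : ℝ))) atTop (nhds x)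

def rhoLt (p : Baire) (x : ℝ) : Prop := rangeM p = {n | (ratEnum n : ℝ) < x}
def rhoGt (p : Baire) (x : ℝ) : Prop := rangeM p = {n | x < (ratEnum n : ℝ)}

def rhoCfLt (p : Baire) (x : ℝ) : Prop :=
  (∀ n, p n ≤ 1) ∧ ∀ n, (p n = 1 ↔ (ratEnum n : ℝ) < x)
def rhoCfGt (p : Baire) (x : ℝ) : Prop :=
  (∀ n, p n ≤ 1) ∧ ∀ n, (p n = 1 ↔ x < (ratEnum n : ℝ))

noncomputable def cfTail : List ℕ → ℝ
  | [] => 0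
  | b :: l => 1 / ((b : ℝ) + cfTail l)

noncomputable def cfApprox (p : Baire) (k : ℕ) : ℝ :=
  ((Denumerable.ofNat ℤ (p 0) : ℤ) : ℝ) + cfTail ((List.range k).map fun i => p (i + 1))

def rhoCf (p : Baire) (x : ℝ) : Prop :=
  ((∀ i, 1 ≤ i → 1 ≤ p i) ∧ Tendsto (cfApprox p) atTop (nhds x)) ∨
    (∃ k, 1 ≤ k ∧ p k = 0 ∧ (∀ i, 1 ≤ i → i < k → 1 ≤ p i) ∧
      (2 ≤ k → 2 ≤ p (k - 1)) ∧ x = cfApprox p (k - 1))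

def rhoDec (p : Baire) (x : ℝ) : Prop :=
  (∀ n, 1 ≤ n → p n ≤ 9) ∧
    x = ((Denumerable.ofNat ℤ (p 0) : ℤ) : ℝ) + ∑' n : ℕ, (p (n + 1) : ℝ) / 10 ^ (n + 1)

/-- The implication problem between two representations of ℝ. -/
def implProblem (d1 d2 : Baire → ℝ → Prop) : Problem where
  dom := {p | ∃ x, d1 p x}
  sol := fun p => {q | ∃ x, d1 p x ∧ d2 q x}

/- trees / WKL / choice on Cantor space -/
def wordCode : List Bool → ℕ
  | [] => 0
  | b :: w => 2 * wordCode w + (if b then 2 else 1)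

def prefixList (x : Baire) (k : ℕ) : List Bool := (List.range k).map fun i => decide (x i = 1)

def isTreeCode (t : Baire) : Prop :=
  (∀ n, t n ≤ 1) ∧
    ∀ w v : List Bool, w <+: v → t (wordCode v) = 1 → t (wordCode w) = 1

def WKL : Problem where
  dom := {t | isTreeCode t ∧ {w : List Bool | t (wordCode w) = 1}.Infinite}
  sol := fun t => {x | (∀ n, x n ≤ 1) ∧ ∀ k, t (wordCode (prefixList x k)) = 1}

def Ap (p : Baire) : Set Baire :=
  {x | (∀ n, x n ≤ 1) ∧ ∀ k, wordCode (prefixList x k) ∉ rangeM p}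

def CCantor : Problem where
  dom := {p | (Ap p).Nonempty}
  sol := Ap

def Cle2 : Problem where
  dom := {p | (Ap p).Nonempty ∧ (Ap p).encard ≤ 2}
  sol := Ap

/- limit and parallelization -/
def projCount (r : Baire) (n : ℕ) : Baire := fun k => r (Nat.pair n k)

def limP : Problem where
  dom := {r | ∃ q : Baire, ∀ k, Tendsto (fun n => projCount r n k) atTop (nhds (q k))}
  sol := fun r => {q | ∀ k, Tendsto (fun n => projCount r n k) atTop (nhds (q k))}

def parallel (f : Problem) : Problem where
  dom := {r | ∀ n, projCount r n ∈ f.dom}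
  sol := fun r => {s | ∀ n, projCount s n ∈ f.sol (projCount r n)}

def MCT : Problem where
  dom := {r | ∃ xs : ℕ → ℝ, (∀ n, rhoCauchy (projCount r n) (xs n)) ∧
    Monotone xs ∧ BddAbove (Set.range xs)}
  sol := fun r => {q | ∃ xs : ℕ → ℝ, (∀ n, rhoCauchy (projCount r n) (xs n)) ∧
    Monotone xs ∧ BddAbove (Set.range xs) ∧ rhoCauchy q (⨆ n, xs n)}

/- SORT and RAT -/
open Classical in
noncomputable def sortOut (p : Baire) : Baire := fun k =>
  if {i | p i = 0}.Infinite then 0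
  else if k < {i | p i = 0}.ncard then 0 else 1

noncomputable def SORT : Problem where
  dom := {p | ∀ n, p n ≤ 1}
  sol := fun p => {sortOut p}

def znk (n : ℕ) : Baire := fun k => if k < n then 0 else 1

def RAT : Problem where
  dom := {p | ∃ x, rhoCauchy p x}
  sol := fun p => {s | ∃ x, rhoCauchy p x ∧
    ((∃ n, x = (ratEnum n : ℝ) ∧ s = znk n) ∨
      ((∀ r : ℚ, x ≠ (r : ℝ)) ∧ s = fun _ => 0))}

/- omniscience principles -/
def projFin (m i : ℕ) (r : Baire) : Baire := fun k => r (m * k + i - 1)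
def isZeroSeq (p : Baire) : Prop := ∀ k, p k = 0
def constSeq (i : ℕ) : Baire := fun _ => i

noncomputable def LPOn (n : ℕ) : Problem where
  dom := Set.univ
  sol := fun r => {constSeq ({i | 1 ≤ i ∧ i ≤ n ∧ isZeroSeq (projFin n i r)}.ncard)}

def LLPOn (n : ℕ) : Problem where
  dom := {r | {i | 1 ≤ i ∧ i ≤ n ∧ ¬ isZeroSeq (projFin n i r)}.encard ≤ 1}
  sol := fun r => {s | ∃ i, 1 ≤ i ∧ i ≤ n ∧ isZeroSeq (projFin n i r) ∧ s = constSeq i}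

def MLPOn (n : ℕ) : Problem where
  dom := {r | ∃ i, 1 ≤ i ∧ i ≤ n ∧ isZeroSeq (projFin n i r)}
  sol := fun r => {s | ∃ i, 1 ≤ i ∧ i ≤ n ∧ isZeroSeq (projFin n i r) ∧ s = constSeq i}

def LPO : Problem where
  dom := Set.univ
  sol := fun p => {s | (isZeroSeq p ∧ s = constSeq 1) ∨ (¬ isZeroSeq p ∧ s = constSeq 0)}

/- choice problems on ℕ etc. -/
def Cfin (n : ℕ) : Problem where
  dom := {p | ∃ i, i < n ∧ i ∉ rangeM p}
  sol := fun p => {s | ∃ i, i < n ∧ i ∉ rangeM p ∧ s = constSeq i}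

def ACCfin (n : ℕ) : Problem where
  dom := {p | (∃ i, i < n ∧ i ∉ rangeM p) ∧ ({i | i < n} ∩ rangeM p).encard ≤ 1}
  sol := (Cfin n).sol

def CNat : Problem where
  dom := {p | ∃ i, i ∉ rangeM p}
  sol := fun p => {s | ∃ i, i ∉ rangeM p ∧ s = constSeq i}

/- differentiation -/
instance : Countable (AddMonoidAlgebra ℚ ℕ) :=
  AddMonoidAlgebra.coeff_injective.countable

instance : Countable (Polynomial ℚ) :=
  Polynomial.toFinsupp_injective.countable

noncomputable def polyEnum : ℕ → Polynomial ℚ :=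
  (exists_surjective_nat (Polynomial ℚ)).choose

noncomputable def polyFun (k : ℕ) : C(Set.Icc (0:ℝ) 1, ℝ) :=
  ⟨fun x => ((polyEnum k).map (algebraMap ℚ ℝ)).eval (x : ℝ),
   (((polyEnum k).map (algebraMap ℚ ℝ)).continuous).comp continuous_subtype_val⟩

noncomputable def deltaC (p : Baire) (f : C(Set.Icc (0:ℝ) 1, ℝ)) : Prop :=
  ∀ n, ‖f - polyFun (p n)‖ ≤ (2 : ℝ) ^ (-(n : ℤ))

def IsDerivOn (f g : C(Set.Icc (0:ℝ) 1, ℝ)) : Prop :=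
  ∀ x : Set.Icc (0:ℝ) 1,
    HasDerivWithinAt (Set.IccExtend (by norm_num : (0:ℝ) ≤ 1) f) (g x) (Set.Icc 0 1) (x : ℝ)

noncomputable def diffP : Problem where
  dom := {p | ∃ f g, deltaC p f ∧ IsDerivOn f g}
  sol := fun p => {q | ∃ f g, deltaC p f ∧ IsDerivOn f g ∧ deltaC q g}

/-! For `MLPO_{n+1} ≤_W LPO_n`, ask `LPO_n` for the number `c` of zero columns among the first
`n`. Knowing `c`, the zero columns among them are found by waiting until `n - c` columns have
shown a nonzero entry; answer the first of them, or `n + 1` if `c = 0`.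

For `LPO_k ≰_W MLPO_m`, suppose `K, H` is a reduction. Near a point `x`, an answer `i` that is
valid for `K y` is valid for `K x` too (validity is a closed condition and `K` is continuous), and
then continuity of `H` at `⟨x, i⟩` forces the first output digits at `y` and `x` to agree. But
`0^N 1^ω → 0̂` while `LPO_k (0^N 1^ω) = 0 ≠ k = LPO_k 0̂`. -/

theorem eventually_apply_eq (x : Baire) (j : ℕ) : ∀ᶠ y in 𝓝 x, y j = x j := by
  have h := (continuous_apply j).tendsto x
  rwa [nhds_discrete ℕ, tendsto_pure] at h

theorem continuous_pairB_left (q : Baire) : Continuous fun p : Baire => pairB p q := by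
  refine continuous_pi fun j => ?_
  by_cases hj : j % 2 = 0
  · simpa [pairB, hj] using continuous_apply (j / 2)
  · simpa [pairB, hj] using continuous_const

theorem continuous_pfst : Continuous pfst :=
  continuous_pi fun j => continuous_apply (2 * j)

theorem pfst_pairB (p q : Baire) : pfst (pairB p q) = p := by
  funext j
  simp [pfst, pairB]

theorem pairB_one (p q : Baire) : pairB p q 1 = q 0 := rfl

def zeroCols (m n : ℕ) (r : Baire) : Set ℕ :=
  {i | 1 ≤ i ∧ i ≤ n ∧ isZeroSeq (projFin m i r)}

theorem zeroCols_finite (m n : ℕ) (r : Baire) : (zeroCols m n r).Finite :=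
  (Set.finite_Icc 1 n).subset fun _ hi => ⟨hi.1, hi.2.1⟩

theorem eventually_zeroCols_subset (m n : ℕ) (r : Baire) :
    ∀ᶠ r' in 𝓝 r, zeroCols m n r' ⊆ zeroCols m n r := by
  have hcol : ∀ i ∈ Finset.Icc 1 n, ∀ᶠ r' in 𝓝 r,
      isZeroSeq (projFin m i r') → isZeroSeq (projFin m i r) := by
    intro i _
    by_cases hi : isZeroSeq (projFin m i r)
    · exact Eventually.of_forall fun _ _ => hi
    · obtain ⟨t, ht⟩ := not_forall.mp hi
      filter_upwards [eventually_apply_eq r (m * t + i - 1)] with r' hr' hz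
      exact (ht (hr'.symm.trans (hz t))).elim
  filter_upwards [(Finset.eventually_all _).2 hcol] with r' h i ⟨h1, h2, hz⟩
  exact ⟨h1, h2, h i (Finset.mem_Icc.2 ⟨h1, h2⟩) hz⟩

theorem WRed.eventually_exists_sol_eq_of_MLPOn {f : Problem} {m : ℕ} (h : WRed f (MLPOn m))
    {x : Baire} (hx : x ∈ f.dom) :
    ∀ᶠ y in 𝓝[f.dom] x, ∃ u ∈ f.sol x, ∃ v ∈ f.sol y, u 0 = v 0 := by
  obtain ⟨Kd, Hd, K, H, hK, hH, hred⟩ := h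
  have hKx : ContinuousWithinAt K f.dom x :=
    (hK x (hred x hx).1).mono fun y hy => (hred y hy).1
  have hcol : ∀ i ∈ Finset.Icc 1 m, ∀ᶠ y in 𝓝[f.dom] x,
      isZeroSeq (projFin m i (K y)) → ∃ u ∈ f.sol x, ∃ v ∈ f.sol y, u 0 = v 0 := by
    intro i hi
    obtain ⟨h1, h2⟩ := Finset.mem_Icc.1 hi
    by_cases hxi : isZeroSeq (projFin m i (K x))
    · set T := f.dom ∩ {y | isZeroSeq (projFin m i (K y))}
      have hans : ∀ y ∈ T,
          pairB y (constSeq i) ∈ Hd ∧ H (pairB y (constSeq i)) ∈ f.sol y :=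
        fun y hy => (hred y hy.1).2.2 _ ⟨i, h1, h2, hy.2, rfl⟩
      have hHT : ContinuousWithinAt (fun y => H (pairB y (constSeq i))) T x :=
        (hH _ (hans x ⟨hx, hxi⟩).1).comp (f := fun y => pairB y (constSeq i))
          (continuous_pairB_left _).continuousWithinAt
          fun y hy => (hans y hy).1
      have hnear := hHT.eventually (eventually_apply_eq _ 0)
      rw [nhdsWithin_inter', eventually_inf_principal] at hnear
      filter_upwards [hnear, self_mem_nhdsWithin] with y hy hyd hyi
      exact ⟨_, (hans x ⟨hx, hxi⟩).2, _, (hans y ⟨hyd, hyi⟩).2, (hy hyi).symm⟩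
    · obtain ⟨t, ht⟩ := not_forall.mp hxi
      filter_upwards [hKx.eventually (eventually_apply_eq _ (m * t + i - 1))] with y hy hyi
      exact (ht (hy.symm.trans (hyi t))).elim
  filter_upwards [(Finset.eventually_all _).2 hcol, self_mem_nhdsWithin] with y hy hyd
  obtain ⟨i, h1, h2, hi⟩ := (hred y hyd).2.1
  exact hy i (Finset.mem_Icc.2 ⟨h1, h2⟩) hi

theorem zeroCols_zero (m n : ℕ) : zeroCols m n 0 = Set.Icc 1 n := by
  ext i
  simp [zeroCols, isZeroSeq, projFin]

theorem zeroCols_eq_empty {m : ℕ} (hm : 1 ≤ m) (n : ℕ) {r : Baire} {N : ℕ}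
    (hr : ∀ j, N ≤ j → r j ≠ 0) : zeroCols m n r = ∅ :=
  Set.eq_empty_of_forall_notMem fun i ⟨h1, _, hz⟩ =>
    hr (m * N + i - 1) (by have := Nat.le_mul_of_pos_left N hm; omega) (hz N)

theorem not_wRed_LPOn_MLPOn {k : ℕ} (hk : 1 ≤ k) (m : ℕ) : ¬ WRed (LPOn k) (MLPOn m) := by
  intro h
  let y : ℕ → Baire := fun N j => if j < N then 0 else 1
  have hy : Tendsto y atTop (𝓝 0) := by
    refine tendsto_pi_nhds.2 fun j => tendsto_const_nhds.congr' ?_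
    filter_upwards [eventually_gt_atTop j] with N hN
    simp [y, hN]
  have hnear := h.eventually_exists_sol_eq_of_MLPOn (Set.mem_univ 0)
  rw [show (LPOn k).dom = Set.univ from rfl, nhdsWithin_univ] at hnear
  obtain ⟨N, u, rfl, v, rfl, huv⟩ := (hy.eventually hnear).exists
  have hyN : zeroCols k k (y N) = ∅ :=
    zeroCols_eq_empty hk k (N := N) fun j hj => by simp [y, not_lt.2 hj]
  change (zeroCols k k 0).ncard = (zeroCols k k (y N)).ncard at huv
  rw [zeroCols_zero, hyN, Set.ncard_Icc_nat, Set.ncard_empty] at huv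
  omega

/-- `⟨p₁, …, p_{n+1}⟩ ↦ ⟨p₁, …, p_n⟩` -/
def dropLastCol (n : ℕ) (r : Baire) : Baire := fun j => r ((n + 1) * (j / n) + j % n)

theorem projFin_dropLastCol {n i : ℕ} (h1 : 1 ≤ i) (h2 : i ≤ n) (r : Baire) :
    projFin n i (dropLastCol n r) = projFin (n + 1) i r := by
  funext t
  have hdiv : (n * t + i - 1) / n = t := by
    rw [show n * t + i - 1 = (i - 1) + n * t by omega, Nat.add_mul_div_left _ _ (by omega),
      Nat.div_eq_of_lt (by omega), zero_add]
  have hmod : (n * t + i - 1) % n = i - 1 := by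
    rw [show n * t + i - 1 = (i - 1) + n * t by omega, Nat.add_mul_mod_self_left,
      Nat.mod_eq_of_lt (by omega)]
  simp only [projFin, dropLastCol, hdiv, hmod]
  congr 1
  omega

theorem zeroCols_dropLastCol (n : ℕ) (r : Baire) :
    zeroCols n n (dropLastCol n r) = zeroCols (n + 1) n r := by
  ext i
  refine and_congr_right fun h1 => and_congr_right fun h2 => ?_
  rw [projFin_dropLastCol h1 h2]

-- On `x = ⟨r, q⟩`, `x 1 = q 0` is the answer of `LPO_n`.
noncomputable def mlpoAnswer (n : ℕ) (x : Baire) : Baire :=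
  constSeq (if x 1 = 0 then n + 1 else sInf (zeroCols (n + 1) n (pfst x)))

/-- Nearby inputs can only lose zero columns, so on inputs that carry the correct number of zero
columns the set of zero columns, hence the answer, is locally constant. -/
theorem continuousOn_mlpoAnswer (n : ℕ) :
    ContinuousOn (mlpoAnswer n) {x | x 1 = (zeroCols (n + 1) n (pfst x)).ncard} := by
  intro x hx
  refine continuousWithinAt_const.congr_of_eventuallyEq (f := fun _ => mlpoAnswer n x) ?_ rfl
  have hsub := (continuous_pfst.tendsto x).eventually
    (eventually_zeroCols_subset (n + 1) n (pfst x))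
  filter_upwards [nhdsWithin_le_nhds (eventually_apply_eq x 1), nhdsWithin_le_nhds hsub,
    self_mem_nhdsWithin] with y hy1 hys hy
  have hcols : zeroCols (n + 1) n (pfst y) = zeroCols (n + 1) n (pfst x) :=
    Set.eq_of_subset_of_ncard_le hys (by rw [← hx, ← hy, hy1]) (zeroCols_finite _ _ _)
  simp only [mlpoAnswer, hy1, hcols]

theorem mlpoAnswer_mem_sol {n : ℕ} {r : Baire} (hr : r ∈ (MLPOn (n + 1)).dom) :
    mlpoAnswer n (pairB r (constSeq (zeroCols (n + 1) n r).ncard)) ∈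
      (MLPOn (n + 1)).sol r := by
  obtain ⟨i, h1, h2, hz⟩ := hr
  simp only [mlpoAnswer, pairB_one, pfst_pairB, constSeq]
  by_cases hc : (zeroCols (n + 1) n r).ncard = 0
  · have hi : i = n + 1 := by
      by_contra hne
      have hempty := (Set.ncard_eq_zero (zeroCols_finite _ _ _)).1 hc
      exact hempty.subset ⟨h1, by omega, hz⟩
    subst hi
    exact ⟨n + 1, h1, le_rfl, hz, by rw [if_pos hc]⟩
  · obtain ⟨h1', h2', hz'⟩ := Nat.sInf_mem (Set.nonempty_of_ncard_ne_zero hc)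
    exact ⟨_, h1', by omega, hz', by rw [if_neg hc]⟩

theorem wRed_MLPOn_succ_LPOn (n : ℕ) : WRed (MLPOn (n + 1)) (LPOn n) := by
  refine ⟨Set.univ, {x | x 1 = (zeroCols (n + 1) n (pfst x)).ncard}, dropLastCol n,
    mlpoAnswer n, (continuous_pi fun j => continuous_apply _).continuousOn,
    continuousOn_mlpoAnswer n, fun r hr => ⟨trivial, trivial, ?_⟩⟩
  intro q hq
  obtain rfl : q = constSeq (zeroCols (n + 1) n r).ncard := by
    rw [← zeroCols_dropLastCol]; exact hq
  refine ⟨?_, mlpoAnswer_mem_sol hr⟩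
  change _ = _
  rw [pfst_pairB]
  rfl

/-- For all `n, k ≥ 1`: `MLPO_{n+1} <_W LPO_n` and `LPO_k ≰_W MLPO_{n+1}`. -/
theorem MLPO_vs_LPO : ∀ n k, 1 ≤ n → 1 ≤ k →
    WLt (MLPOn (n + 1)) (LPOn n) ∧ ¬ WRed (LPOn k) (MLPOn (n + 1)) :=
  fun n _ hn hk =>
    ⟨⟨wRed_MLPOn_succ_LPOn n, not_wRed_LPOn_MLPOn hn _⟩, not_wRed_LPOn_MLPOn hk _⟩
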